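/- arXiv:2506.06924 — 6 statements merged into one kernel-verified Lean document; each statement's English description precedes it below -/
import Mathlib

section
/- If the numbers E(n,g) satisfy the Harer–Zagier recurrence (n+1)E(n,g) = 2(2n-1)E(n-1,g) + (n-1)(2n-1)(2n-3)E(n-2,g-1) with E(0,0)=1 and E(n,g)=0 for g<0 or n<2g, then for all even n = 2g, E(n, n/2) = (2n)! / (2^n * (n+1)!). -/
/-!
On the diagonal `n = 2g` the term `E (n - 1) g` of the Harer–Zagier recurrence vanishes (as
`n - 1 < 2g`), so the recurrence at `n = 2g + 2` collapses to a first-order recurrence in `g`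
relating `E (2g + 2) (g + 1)` to `E (2g) g`. The closed form satisfies the same first-order
recurrence and takes the value `1` at `g = 0`, so the two agree by induction on `g`.
-/

def topGenusCount (g : ℕ) : ℚ :=
  (Nat.factorial (2 * (2 * g)) : ℚ) / (2 ^ (2 * g) * Nat.factorial (2 * g + 1))

lemma topGenusCount_succ (g : ℕ) :
    (2 * (g : ℚ) + 3) * topGenusCount (g + 1) =
      (2 * g + 1) * (4 * g + 3) * (4 * g + 1) * topGenusCount g := by
  have hfac4 : ((2 * (2 * (g + 1))).factorial : ℚ) =
      (4 * g + 4) * (4 * g + 3) * (4 * g + 2) * (4 * g + 1) * (2 * (2 * g)).factorial := by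
    rw [show 2 * (2 * (g + 1)) = 2 * (2 * g) + 1 + 1 + 1 + 1 by ring]
    push_cast [Nat.factorial_succ]
    ring
  have hfac2 : ((2 * (g + 1) + 1).factorial : ℚ) =
      (2 * g + 3) * (2 * g + 2) * (2 * g + 1).factorial := by
    rw [show 2 * (g + 1) + 1 = 2 * g + 1 + 1 + 1 by ring]
    push_cast [Nat.factorial_succ]
    ring
  have hne : ((2 * g + 1).factorial : ℚ) ≠ 0 := by positivity
  unfold topGenusCount
  rw [hfac4, hfac2]
  field_simp
  ring

def HarerZagierRecurrence (E : ℕ → ℤ → ℚ) : Prop :=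
  ∀ n : ℕ, 1 ≤ n → ∀ g : ℤ,
    ((n : ℚ) + 1) * E n g =
      2 * (2 * n - 1) * E (n - 1) g +
        ((n : ℚ) - 1) * (2 * n - 1) * (2 * n - 3) * E (n - 2) (g - 1)

lemma HarerZagierRecurrence.diagonal_succ {E : ℕ → ℤ → ℚ} (hrec : HarerZagierRecurrence E)
    (g : ℕ) (hvanish : E (2 * g + 1) (g + 1) = 0) :
    (2 * (g : ℚ) + 3) * E (2 * g + 2) (g + 1) =
      (2 * g + 1) * (4 * g + 3) * (4 * g + 1) * E (2 * g) g := by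
  have h := hrec (2 * g + 2) (by omega) (g + 1)
  rw [show 2 * g + 2 - 1 = 2 * g + 1 by omega, Nat.add_sub_cancel, add_sub_cancel_right,
    hvanish] at h
  push_cast at h
  linear_combination h

/-- Harer–Zagier recurrence implies `E (2g) g = (2n)!/(2^n (n+1)!)` where `n = 2g`. -/
theorem stmt_1 (E : ℕ → ℤ → ℚ)
    (h0 : E 0 0 = 1)
    (hbd : ∀ (n : ℕ) (g : ℤ), g < 0 ∨ (n : ℤ) < 2 * g → E n g = 0)
    (hrec : ∀ n : ℕ, 1 ≤ n → ∀ g : ℤ,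
      ((n : ℚ) + 1) * E n g =
        2 * (2 * n - 1) * E (n - 1) g +
          ((n : ℚ) - 1) * (2 * n - 1) * (2 * n - 3) * E (n - 2) (g - 1)) :
    ∀ g : ℕ, E (2 * g) (g : ℤ) =
      (Nat.factorial (2 * (2 * g)) : ℚ) /
        (2 ^ (2 * g) * Nat.factorial (2 * g + 1)) := by
  intro g
  change E (2 * g) g = topGenusCount g
  induction g with
  | zero => simpa [topGenusCount] using h0
  | succ g ih =>
    have hvanish : E (2 * g + 1) (g + 1) = 0 := hbd _ _ (Or.inr (by push_cast; omega))
    have hstep := HarerZagierRecurrence.diagonal_succ hrec g hvanish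
    rw [ih, ← topGenusCount_succ] at hstep
    push_cast
    exact mul_left_cancel₀ (by positivity) hstep
end

section
/- For every θ ∈ [0, 1/2] there exists a unique λ ∈ [0, 1/4] such that θ = 1/2 - (λ/√(1-4λ)) · log((1+√(1-4λ))/(1-√(1-4λ))), where the expression is interpreted by continuity at λ = 1/4 (value 0) and λ = 0 (value 1/2). Moreover the map λ ↦ 1/2 - (λ/√(1-4λ)) log((1+√(1-4λ))/(1-√(1-4λ))) is strictly monotone decreasing on [0,1/4]. -/
open Real

/-- The map `λ ↦ 1/2 - (λ/√(1-4λ))·log((1+√(1-4λ))/(1-√(1-4λ)))`,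
extended by continuity at `λ = 1/4` (value `0`). -/
noncomputable def thetaOfLam (l : ℝ) : ℝ :=
  if l = 1 / 4 then 0
  else 1 / 2 - (l / Real.sqrt (1 - 4 * l)) *
    Real.log ((1 + Real.sqrt (1 - 4 * l)) / (1 - Real.sqrt (1 - 4 * l)))

section Aux
open Set

noncomputable def G (s : ℝ) : ℝ :=
  1 / 2 - ((1 - s ^ 2) / (4 * s)) * (Real.log (1 + s) - Real.log (1 - s))

lemma hasDerivAt_L {x : ℝ} (hx0 : -1 < x) (hx1 : x < 1) :
    HasDerivAt (fun s => Real.log (1 + s) - Real.log (1 - s)) (1 / (1 + x) + 1 / (1 - x)) x := by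
  have h1 : HasDerivAt (fun s : ℝ => 1 + s) 1 x := by simpa using (hasDerivAt_id x).const_add 1
  have h2 : HasDerivAt (fun s : ℝ => 1 - s) (-1) x := by simpa using (hasDerivAt_id x).const_sub 1
  have l1 := h1.log (ne_of_gt (by linarith : (0:ℝ) < 1 + x))
  have l2 := h2.log (ne_of_gt (by linarith : (0:ℝ) < 1 - x))
  exact (l1.sub l2).congr_deriv (by ring)

lemma contL : ContinuousOn (fun s => Real.log (1 + s) - Real.log (1 - s)) (Ioo (0:ℝ) 1) := by
  apply ContinuousOn.sub
  · exact ContinuousOn.log (by fun_prop) (fun x hx => by nlinarith [hx.1, hx.2])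
  · exact ContinuousOn.log (by fun_prop) (fun x hx => by nlinarith [hx.1, hx.2])

lemma I1 : ∀ s ∈ Ioo (0:ℝ) 1, 2 * s < Real.log (1 + s) - Real.log (1 - s) := by
  have mono : StrictMonoOn (fun s => Real.log (1 + s) - Real.log (1 - s) - 2 * s) (Ico (0:ℝ) 1) := by
    apply strictMonoOn_of_deriv_pos (convex_Ico 0 1)
    · apply ContinuousOn.sub
      apply ContinuousOn.sub
      · exact ContinuousOn.log (by fun_prop) (fun x hx => by nlinarith [hx.1, hx.2])
      · exact ContinuousOn.log (by fun_prop) (fun x hx => by nlinarith [hx.1, hx.2])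
      · fun_prop
    · intro x hx
      rw [interior_Ico] at hx
      obtain ⟨hx0, hx1⟩ := hx
      have hd : HasDerivAt (fun s => Real.log (1 + s) - Real.log (1 - s) - 2 * s)
          (1 / (1 + x) + 1 / (1 - x) - 2) x :=
        (hasDerivAt_L (by linarith) hx1).sub (by simpa using (hasDerivAt_id x).const_mul 2)
      rw [hd.deriv]
      have h1 : (0:ℝ) < 1 + x := by linarith
      have h2 : (0:ℝ) < 1 - x := by linarith
      rw [div_add_div _ _ (ne_of_gt h1) (ne_of_gt h2), sub_pos, lt_div_iff₀ (by positivity)]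
      nlinarith
  intro s hs
  have := mono ⟨le_refl 0, by norm_num⟩ ⟨hs.1.le, hs.2⟩ hs.1
  simp at this
  linarith

lemma I2 : ∀ s ∈ Ioo (0:ℝ) 1, Real.log (1 + s) - Real.log (1 - s) < 2 * s / (1 - s ^ 2) := by
  have mono : StrictMonoOn (fun s => 2 * s / (1 - s ^ 2) - (Real.log (1 + s) - Real.log (1 - s))) (Ico (0:ℝ) 1) := by
    apply strictMonoOn_of_deriv_pos (convex_Ico 0 1)
    · apply ContinuousOn.sub
      · apply ContinuousOn.div (by fun_prop) (by fun_prop)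
        intro x hx; nlinarith [hx.1, hx.2]
      · apply ContinuousOn.sub
        · exact ContinuousOn.log (by fun_prop) (fun x hx => by nlinarith [hx.1, hx.2])
        · exact ContinuousOn.log (by fun_prop) (fun x hx => by nlinarith [hx.1, hx.2])
    · intro x hx
      rw [interior_Ico] at hx
      obtain ⟨hx0, hx1⟩ := hx
      have h1 : (0:ℝ) < 1 + x := by linarith
      have h2 : (0:ℝ) < 1 - x := by linarith
      have hden : 1 - x ^ 2 ≠ 0 := by nlinarith
      have hnum : HasDerivAt (fun s : ℝ => 2 * s) 2 x := by
        simpa using (hasDerivAt_id x).const_mul 2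
      have hdd : HasDerivAt (fun s : ℝ => 1 - s ^ 2) (-(2 * x)) x := by
        simpa using ((hasDerivAt_pow 2 x).const_sub 1)
      have hfrac := hnum.div hdd hden
      have hd : HasDerivAt (fun s => 2 * s / (1 - s ^ 2) - (Real.log (1 + s) - Real.log (1 - s)))
          ((2 * (1 - x ^ 2) - 2 * x * -(2 * x)) / (1 - x ^ 2) ^ 2 - (1 / (1 + x) + 1 / (1 - x))) x :=
        hfrac.sub (hasDerivAt_L (by linarith) hx1)
      rw [hd.deriv]
      rw [div_add_div _ _ (ne_of_gt h1) (ne_of_gt h2), sub_pos, div_lt_div_iff₀ (by positivity) (by positivity)]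
      nlinarith [mul_pos h1 h2, mul_pos hx0 hx0, mul_pos (mul_pos h1 h2) (mul_pos hx0 hx0), mul_pos (mul_pos (mul_pos h1 h2) (mul_pos h1 h2)) (mul_pos hx0 hx0)]
  intro s hs
  have := mono ⟨le_refl 0, by norm_num⟩ ⟨hs.1.le, hs.2⟩ hs.1
  simp at this
  linarith

lemma contG : ContinuousOn G (Ioo (0:ℝ) 1) := by
  unfold G
  apply ContinuousOn.sub continuousOn_const
  apply ContinuousOn.mul
  · apply ContinuousOn.div (by fun_prop) (by fun_prop)
    intro x hx; have := hx.1; positivity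
  · exact contL

lemma Gmono : StrictMonoOn G (Ioo (0:ℝ) 1) := by
  apply strictMonoOn_of_deriv_pos (convex_Ioo 0 1) contG
  rw [interior_Ioo]
  intro x hx
  obtain ⟨hx0, hx1⟩ := hx
  have h1 : (0:ℝ) < 1 + x := by linarith
  have h2 : (0:ℝ) < 1 - x := by linarith
  have hA : HasDerivAt (fun s : ℝ => (1 - s ^ 2) / (4 * s)) (-((1 + x ^ 2) / (4 * x ^ 2))) x := by
    have hn : HasDerivAt (fun s : ℝ => 1 - s ^ 2) (-(2 * x)) x := by
      simpa using ((hasDerivAt_pow 2 x).const_sub 1)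
    have hdd : HasDerivAt (fun s : ℝ => 4 * s) 4 x := by
      simpa using (hasDerivAt_id x).const_mul 4
    have := hn.div hdd (by positivity)
    exact this.congr_deriv (by field_simp; ring)
  have hd : HasDerivAt G
      (0 - (-((1 + x ^ 2) / (4 * x ^ 2)) * (Real.log (1 + x) - Real.log (1 - x)) +
        (1 - x ^ 2) / (4 * x) * (1 / (1 + x) + 1 / (1 - x)))) x := by
    exact (hasDerivAt_const x (1/2 : ℝ)).sub (hA.mul (hasDerivAt_L (by linarith) hx1))
  rw [hd.deriv]
  have hL := I1 x ⟨hx0, hx1⟩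
  have e1 : (1 - x ^ 2) / (4 * x) * (1 / (1 + x) + 1 / (1 - x)) = 1 / (2 * x) := by
    rw [div_add_div _ _ (ne_of_gt h1) (ne_of_gt h2)]
    field_simp
    ring
  rw [e1]
  have key : 1 / (2 * x) < (1 + x ^ 2) / (4 * x ^ 2) * (Real.log (1 + x) - Real.log (1 - x)) := by
    have step : (1 + x ^ 2) / (4 * x ^ 2) * (2 * x) ≤ (1 + x ^ 2) / (4 * x ^ 2) * (Real.log (1 + x) - Real.log (1 - x)) :=
      mul_le_mul_of_nonneg_left hL.le (by positivity)
    have e2 : (1 + x ^ 2) / (4 * x ^ 2) * (2 * x) = (1 + x ^ 2) / (2 * x) := by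
      field_simp; ring
    have e3 : 1 / (2 * x) < (1 + x ^ 2) / (2 * x) := by
      rw [div_lt_div_iff₀ (by positivity) (by positivity)]
      nlinarith [mul_pos hx0 (mul_pos hx0 hx0)]
    calc 1 / (2 * x) < (1 + x ^ 2) / (2 * x) := e3
      _ = (1 + x ^ 2) / (4 * x ^ 2) * (2 * x) := e2.symm
      _ ≤ _ := step
  linarith

lemma Gpos : ∀ s ∈ Ioo (0:ℝ) 1, 0 < G s := by
  intro s hs
  obtain ⟨h0, h1⟩ := hs
  have h2 := I2 s ⟨h0, h1⟩
  have hA : (0:ℝ) < (1 - s ^ 2) / (4 * s) := by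
    apply div_pos (by nlinarith) (by linarith)
  have : (1 - s ^ 2) / (4 * s) * (Real.log (1 + s) - Real.log (1 - s)) <
      (1 - s ^ 2) / (4 * s) * (2 * s / (1 - s ^ 2)) := by
    exact mul_lt_mul_of_pos_left h2 hA
  have e : (1 - s ^ 2) / (4 * s) * (2 * s / (1 - s ^ 2)) = 1 / 2 := by
    have hs2 : 1 - s ^ 2 ≠ 0 := by nlinarith
    field_simp
    ring
  unfold G
  rw [e] at this
  linarith

lemma Gub : ∀ s ∈ Ioo (0:ℝ) 1, G s < s ^ 2 / 2 := by
  intro s hs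
  obtain ⟨h0, h1⟩ := hs
  have hL := I1 s ⟨h0, h1⟩
  have hA : (0:ℝ) < (1 - s ^ 2) / (4 * s) := by
    apply div_pos (by nlinarith) (by linarith)
  have : (1 - s ^ 2) / (4 * s) * (2 * s) <
      (1 - s ^ 2) / (4 * s) * (Real.log (1 + s) - Real.log (1 - s)) :=
    mul_lt_mul_of_pos_left hL hA
  have e : (1 - s ^ 2) / (4 * s) * (2 * s) = (1 - s ^ 2) / 2 := by
    field_simp; ring
  unfold G
  rw [e] at this
  linarith

lemma Glt : ∀ s ∈ Ioo (0:ℝ) 1, G s < 1 / 2 := by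
  intro s hs
  have h := Gub s hs
  have h1 := hs.1
  have h2 := hs.2
  nlinarith

lemma Glb : ∀ s : ℝ, 1 / 2 ≤ s → s < 1 → 1 / 2 - 3 * Real.sqrt (1 - s) ≤ G s := by
  intro s hhalf h1
  set u := 1 - s with hu
  have hu0 : 0 < u := by simp [hu]; linarith
  have hu2 : u ≤ 1 / 2 := by simp [hu]; linarith
  have hru : 0 < Real.sqrt u := Real.sqrt_pos.2 hu0
  have hru1 : Real.sqrt u ≤ 1 := Real.sqrt_le_one.2 (by linarith)
  have husq : Real.sqrt u ^ 2 = u := Real.sq_sqrt hu0.le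
  -- bound on the log part
  have hlog1 : Real.log (1 + s) ≤ 1 := by
    calc Real.log (1 + s) ≤ (1 + s) - 1 := Real.log_le_sub_one_of_pos (by linarith)
      _ ≤ 1 := by linarith
  have hlog2 : -Real.log (1 - s) ≤ 2 / Real.sqrt u := by
    have e : Real.log (1 - s) = 2 * Real.log (Real.sqrt u) := by
      rw [hu] at husq ⊢
      nth_rewrite 1 [← husq]
      rw [Real.log_pow]
      push_cast
      ring
    have hb : Real.log (Real.sqrt u) = - Real.log (1 / Real.sqrt u) := by
      rw [Real.log_div (by norm_num) (ne_of_gt hru)]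
      simp
    have hc : Real.log (1 / Real.sqrt u) ≤ 1 / Real.sqrt u - 1 :=
      Real.log_le_sub_one_of_pos (by positivity)
    have : -Real.log (1 - s) = 2 * Real.log (1 / Real.sqrt u) := by
      rw [e, hb]; ring
    rw [this]
    have : 2 * Real.log (1 / Real.sqrt u) ≤ 2 * (1 / Real.sqrt u - 1) := by linarith
    calc 2 * Real.log (1 / Real.sqrt u) ≤ 2 * (1 / Real.sqrt u - 1) := this
      _ ≤ 2 / Real.sqrt u := by rw [mul_sub, mul_one_div]; linarith
  have hLnn : 0 ≤ Real.log (1 + s) - Real.log (1 - s) := by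
    have := Real.log_le_log (by linarith : (0:ℝ) < 1 - s) (by linarith : 1 - s ≤ 1 + s)
    linarith
  have hLub : Real.log (1 + s) - Real.log (1 - s) ≤ 1 + 2 / Real.sqrt u := by linarith
  have hAub : (1 - s ^ 2) / (4 * s) ≤ u := by
    rw [div_le_iff₀ (by linarith)]
    nlinarith
  have hAnn : 0 ≤ (1 - s ^ 2) / (4 * s) := by
    apply div_nonneg (by nlinarith) (by linarith)
  have hF : (1 - s ^ 2) / (4 * s) * (Real.log (1 + s) - Real.log (1 - s)) ≤ u * (1 + 2 / Real.sqrt u) :=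
    mul_le_mul hAub hLub hLnn (by linarith)
  have hself : Real.sqrt u * Real.sqrt u = u := Real.mul_self_sqrt hu0.le
  have e2 : u * (1 + 2 / Real.sqrt u) = u + 2 * Real.sqrt u := by
    field_simp
    nlinarith [hself]
  have hule : u ≤ Real.sqrt u := by
    nlinarith [husq, hru1, hru.le]
  unfold G
  rw [e2] at hF
  rw [← hu]
  linarith

lemma Teq {l : ℝ} (h0 : 0 < l) (h1 : l < 1 / 4) :
    thetaOfLam l = G (Real.sqrt (1 - 4 * l)) := by
  have hpos : (0:ℝ) < 1 - 4 * l := by linarith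
  have hs : Real.sqrt (1 - 4 * l) ^ 2 = 1 - 4 * l := Real.sq_sqrt hpos.le
  have hspos : 0 < Real.sqrt (1 - 4 * l) := Real.sqrt_pos.2 hpos
  have hslt : Real.sqrt (1 - 4 * l) < 1 :=
    (Real.sqrt_lt' one_pos).2 (by nlinarith)
  unfold thetaOfLam G
  rw [if_neg (by intro h; rw [h] at h1; linarith)]
  set s := Real.sqrt (1 - 4 * l) with hsdef
  rw [Real.log_div (by linarith) (by linarith)]
  have hl : l = (1 - s ^ 2) / 4 := by rw [hs]; ring
  rw [hl]
  have : (1 - s ^ 2) / 4 / s = (1 - s ^ 2) / (4 * s) := by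
    rw [div_div]
  rw [this]

lemma T0 : thetaOfLam 0 = 1 / 2 := by
  unfold thetaOfLam
  norm_num

lemma Tq : thetaOfLam (1 / 4) = 0 := by
  simp [thetaOfLam]

lemma smem {l : ℝ} (h0 : 0 < l) (h1 : l < 1 / 4) : Real.sqrt (1 - 4 * l) ∈ Ioo (0:ℝ) 1 :=
  ⟨Real.sqrt_pos.2 (by linarith), (Real.sqrt_lt' one_pos).2 (by nlinarith)⟩

lemma Tanti : StrictAntiOn thetaOfLam (Icc (0:ℝ) (1 / 4)) := by
  intro a ha b hb hab
  obtain ⟨ha0, ha4⟩ := ha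
  obtain ⟨hb0, hb4⟩ := hb
  rcases eq_or_lt_of_le hb4 with hb4' | hb4'
  · rw [hb4', Tq]
    rcases eq_or_lt_of_le ha0 with ha0' | ha0'
    · rw [← ha0', T0]; norm_num
    · rw [Teq ha0' (by rw [hb4'] at hab; exact hab)]
      exact Gpos _ (smem ha0' (by rw [hb4'] at hab; exact hab))
  · have hb0' : 0 < b := lt_of_le_of_lt ha0 hab
    rcases eq_or_lt_of_le ha0 with ha0' | ha0'
    · rw [← ha0', T0, Teq hb0' hb4']
      exact Glt _ (smem hb0' hb4')
    · rw [Teq ha0' (hab.trans hb4'), Teq hb0' hb4']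
      exact Gmono (smem hb0' hb4') (smem ha0' (hab.trans hb4'))
        (Real.sqrt_lt_sqrt (by linarith) (by linarith))

lemma Tsurj : ∀ θ : ℝ, 0 ≤ θ → θ ≤ 1 / 2 → ∃ l, l ∈ Icc (0:ℝ) (1 / 4) ∧ thetaOfLam l = θ := by
  intro θ h0 h2
  rcases eq_or_lt_of_le h0 with h0' | h0'
  · exact ⟨1 / 4, by norm_num, by rw [Tq, ← h0']⟩
  rcases eq_or_lt_of_le h2 with h2' | h2'
  · exact ⟨0, by norm_num, by rw [T0, h2']⟩
  · set s₁ := Real.sqrt θ with hs₁def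
    have hs₁ : s₁ ∈ Ioo (0:ℝ) 1 := ⟨Real.sqrt_pos.2 h0', (Real.sqrt_lt' one_pos).2 (by nlinarith)⟩
    have hs₁sq : s₁ ^ 2 = θ := Real.sq_sqrt h0
    have hGs₁ : G s₁ ≤ θ := by
      have := Gub s₁ hs₁
      rw [hs₁sq] at this
      linarith
    set ε := 1 / 2 - θ with hε
    have hε0 : 0 < ε := by simp [hε]; linarith
    have hε2 : ε ≤ 1 / 2 := by simp [hε]; linarith
    set u := ε ^ 2 / 10 with hudef
    clear_value ε
    have hu0 : 0 < u := by positivity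
    have hu40 : u ≤ 1 / 40 := by rw [hudef]; nlinarith
    clear_value u
    set s₂ := 1 - u with hs₂def
    clear_value s₂
    have hs₂half : 1 / 2 ≤ s₂ := by rw [hs₂def]; linarith
    have hs₂lt : s₂ < 1 := by rw [hs₂def]; linarith
    have hsqrtu : Real.sqrt (1 - s₂) < ε / 3 := by
      have e : 1 - s₂ = u := by rw [hs₂def]; ring
      rw [e, Real.sqrt_lt' (by positivity)]
      rw [hudef]
      nlinarith
    have hGs₂ : θ ≤ G s₂ := by
      have := Glb s₂ hs₂half hs₂lt
      have h3 : 3 * Real.sqrt (1 - s₂) < ε := by linarith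
      simp only [hε] at h3
      linarith
    have hs₁₂ : s₁ ≤ s₂ := by
      have ha : s₁ < 3 / 4 := (Real.sqrt_lt' (by norm_num)).2 (by nlinarith)
      have hb : (3:ℝ) / 4 ≤ s₂ := by rw [hs₂def]; linarith
      linarith
    have hsub : Icc s₁ s₂ ⊆ Ioo (0:ℝ) 1 := fun x hx =>
      ⟨lt_of_lt_of_le hs₁.1 hx.1, lt_of_le_of_lt hx.2 hs₂lt⟩
    obtain ⟨s, hsmem, hGs⟩ := intermediate_value_Icc hs₁₂ (contG.mono hsub) ⟨hGs₁, hGs₂⟩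
    have hsIoo : s ∈ Ioo (0:ℝ) 1 := hsub hsmem
    have h0l : 0 < (1 - s ^ 2) / 4 := by nlinarith [hsIoo.1, hsIoo.2]
    have h1l : (1 - s ^ 2) / 4 < 1 / 4 := by nlinarith [hsIoo.1]
    refine ⟨(1 - s ^ 2) / 4, ⟨h0l.le, h1l.le⟩, ?_⟩
    rw [Teq h0l h1l]
    have e : 1 - 4 * ((1 - s ^ 2) / 4) = s ^ 2 := by ring
    rw [e, Real.sqrt_sq hsIoo.1.le, hGs]

end Aux

open Set in
/-- For every `θ ∈ [0, 1/2]` there is a unique `λ ∈ [0, 1/4]` with `thetaOfLam λ = θ`,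
and `thetaOfLam` is strictly decreasing on `[0, 1/4]`. -/
theorem stmt_2 :
    (∀ θ ∈ Set.Icc (0 : ℝ) (1 / 2),
      ∃! l, l ∈ Set.Icc (0 : ℝ) (1 / 4) ∧ thetaOfLam l = θ) ∧
    StrictAntiOn thetaOfLam (Set.Icc (0 : ℝ) (1 / 4)) := by
  refine ⟨?_, Tanti⟩
  intro θ hθ
  obtain ⟨l, hl, hval⟩ := Tsurj θ hθ.1 hθ.2
  exact ⟨l, ⟨hl, hval⟩, fun y hy => Tanti.injOn hy.1 hl (by rw [hy.2, hval])⟩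
end

section
/- Let θ ∈ (0,1/2) and let λ = λ(θ) ∈ (0,1/4) satisfy θ = 1/2 - (λ/√(1-4λ))·log((1+√(1-4λ))/(1-√(1-4λ))). Define f(θ) = -θ·log(1-4λ) - (1-2θ)·log(λ) + 2(log 2 - 1)θ. Then λ and f satisfy the identity 1 = 4λ + 4λ²·e^{-f'(θ)}, where f'(θ) is the derivative of f with respect to θ (λ being a differentiable function of θ by the inverse function theorem). -/
/-- If `λ(θ) ∈ (0,1/4)` is the (differentiable) implicit solution of
`θ = 1/2 - (λ/√(1-4λ))·log((1+√(1-4λ))/(1-√(1-4λ)))` and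
`f(θ) = -θ log(1-4λ) - (1-2θ) log λ + 2(log 2 - 1)θ`, then
`1 = 4λ + 4λ²·e^{-f'(θ)}`. -/
theorem stmt_4 (lam : ℝ → ℝ)
    (hmem : ∀ t ∈ Set.Ioo (0 : ℝ) (1 / 2), lam t ∈ Set.Ioo (0 : ℝ) (1 / 4))
    (hrel : ∀ t ∈ Set.Ioo (0 : ℝ) (1 / 2),
      t = 1 / 2 - (lam t / Real.sqrt (1 - 4 * lam t)) *
        Real.log ((1 + Real.sqrt (1 - 4 * lam t)) / (1 - Real.sqrt (1 - 4 * lam t))))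
    (hdiff : ∀ t ∈ Set.Ioo (0 : ℝ) (1 / 2), DifferentiableAt ℝ lam t)
    (f : ℝ → ℝ)
    (hf : ∀ t, f t = -t * Real.log (1 - 4 * lam t) - (1 - 2 * t) * Real.log (lam t)
      + 2 * (Real.log 2 - 1) * t)
    (θ : ℝ) (hθ : θ ∈ Set.Ioo (0 : ℝ) (1 / 2)) :
    1 = 4 * lam θ + 4 * (lam θ) ^ 2 * Real.exp (-(deriv f θ)) := by
  obtain ⟨hθ0, hθ2⟩ := hθ
  obtain ⟨hl0, hl4⟩ := hmem θ ⟨hθ0, hθ2⟩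
  set l := lam θ with hldef
  set l' := deriv lam θ with hl'def
  have h14 : (0:ℝ) < 1 - 4 * l := by linarith
  set s := Real.sqrt (1 - 4 * l) with hsdef
  have hs0 : 0 < s := Real.sqrt_pos.mpr h14
  have hs2 : s ^ 2 = 1 - 4 * l := Real.sq_sqrt h14.le
  have hs1 : s < 1 := by nlinarith [hs2, hs0, hl0]
  have h1ps : (0:ℝ) < 1 + s := by linarith
  have h1ms : (0:ℝ) < 1 - s := by linarith
  set L := Real.log (1 + s) - Real.log (1 - s) with hLdef
  have hlam : HasDerivAt lam l' θ := (hdiff θ ⟨hθ0, hθ2⟩).hasDerivAt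
  have hinner : HasDerivAt (fun t => 1 - 4 * lam t) (0 - 4 * l') θ :=
    (hasDerivAt_const θ 1).sub (hlam.const_mul 4)
  have hu : HasDerivAt (fun t => Real.sqrt (1 - 4 * lam t)) ((0 - 4*l') / (2 * s)) θ :=
    hinner.sqrt (ne_of_gt h14)
  have hA := hlam.div hu (ne_of_gt hs0)
  have hB1 := ((hasDerivAt_const θ (1:ℝ)).add hu).log (ne_of_gt h1ps)
  have hB2 := ((hasDerivAt_const θ (1:ℝ)).sub hu).log (ne_of_gt h1ms)
  have hG := (hasDerivAt_const θ ((1:ℝ)/2)).sub (hA.mul (hB1.sub hB2))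
  have hev : (fun t => 1/2 - (lam t / Real.sqrt (1 - 4 * lam t)) *
      (Real.log (1 + Real.sqrt (1 - 4 * lam t)) - Real.log (1 - Real.sqrt (1 - 4 * lam t))))
      =ᶠ[nhds θ] fun t => t := by
    filter_upwards [isOpen_Ioo.mem_nhds ⟨hθ0, hθ2⟩] with t ht
    obtain ⟨ht0, ht4⟩ := hmem t ht
    have h14t : (0:ℝ) < 1 - 4 * lam t := by linarith
    have hst0 : 0 < Real.sqrt (1 - 4 * lam t) := Real.sqrt_pos.mpr h14t
    have hst1 : Real.sqrt (1 - 4 * lam t) < 1 := by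
      nlinarith [Real.sq_sqrt h14t.le, hst0]
    rw [← Real.log_div (by linarith) (by linarith)]
    exact (hrel t ht).symm
  have hid := hG.congr_of_eventuallyEq hev.symm
  have hD := hid.unique (hasDerivAt_id θ)
  simp only [Pi.add_apply, Pi.sub_apply, Pi.div_apply] at hD
  rw [← hldef] at hD
  rw [← hsdef] at hD
  rw [← hLdef] at hD
  field_simp at hD
  have hE' : (32*s^3*l) * (l' * (s - (1 - 2*l) * L)) = (32*s^3*l) * s^3 := by
    linear_combination (4*s^3) * hD + (8*s^3*l'*L*(2*l - s^2) - 8*s^6) * hs2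
  have hE : l' * (s - (1 - 2*l) * L) = s ^ 3 :=
    mul_left_cancel₀ (by positivity) hE'
  have hθL : θ = 1/2 - (l / s) * L := by
    have h := hrel θ ⟨hθ0, hθ2⟩
    rwa [Real.log_div (by linarith) (by linarith)] at h
  have hlL : l * L = (1/2 - θ) * s := by
    field_simp at hθL
    linear_combination hθL / 2
  have key : l' * (4*θ*l - (1 - 2*θ)*(1 - 4*l)) = 2*l*(1 - 4*l) := by
    have keys : s * (l' * (4*θ*l - (1 - 2*θ)*(1 - 4*l))) = s * (2*l*(1 - 4*l)) := by
      linear_combination (2*l)*hE + (2*l'*(1-2*l))*hlL + (2*l*s)*hs2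
    exact mul_left_cancel₀ (ne_of_gt hs0) keys
  have hf1 : HasDerivAt (fun t => -t * Real.log (1 - 4 * lam t))
      (-1 * Real.log (1 - 4*l) + (-θ) * ((0 - 4*l')/(1 - 4*l))) θ :=
    ((hasDerivAt_id θ).neg).mul (hinner.log (ne_of_gt h14))
  have hf2 : HasDerivAt (fun t => (1 - 2*t) * Real.log (lam t))
      ((0 - 2*1) * Real.log l + (1 - 2*θ) * (l'/l)) θ :=
    ((hasDerivAt_const θ 1).sub ((hasDerivAt_id θ).const_mul 2)).mul (hlam.log (ne_of_gt hl0))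
  have hf3 : HasDerivAt (fun t : ℝ => 2 * (Real.log 2 - 1) * t) (2*(Real.log 2 - 1) * 1) θ :=
    (hasDerivAt_id θ).const_mul _
  have hfF : HasDerivAt f
      ((-1 * Real.log (1 - 4*l) + (-θ) * ((0 - 4*l')/(1 - 4*l)))
        - ((0 - 2*1) * Real.log l + (1 - 2*θ) * (l'/l))
        + 2*(Real.log 2 - 1) * 1) θ := by
    rw [show f = fun t => -t * Real.log (1 - 4 * lam t) - (1 - 2 * t) * Real.log (lam t)
      + 2 * (Real.log 2 - 1) * t from funext hf]
    exact (hf1.sub hf2).add hf3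
  have hF : deriv f θ = Real.log (4 * l^2 / (1 - 4*l)) := by
    rw [hfF.deriv, Real.log_div (by positivity) (ne_of_gt h14),
      Real.log_mul (by norm_num) (by positivity), Real.log_pow,
      show (4:ℝ) = 2^2 by norm_num, Real.log_pow]
    push_cast
    have h2 : (-θ) * ((0 - 4*l')/(1 - 4*l)) - (1 - 2*θ) * (l'/l) - 2 = 0 := by
      field_simp
      linear_combination key
    linarith [h2]
  rw [hF, Real.exp_neg, Real.exp_log (div_pos (by positivity) h14), inv_div]
  field_simp
  ring
end

section
/- Let θ ∈ (0,1/2), λ = λ(θ) as in the Harer–Zagier asymptotics, f(θ) = -θ log(1-4λ) - (1-2θ) log λ + 2(log 2 - 1)θ, and J(θ) = √(2/(λ(1-2θ-4λ+4θλ))). Then the exact identity 4λ·(θJ'(θ)/J(θ) + 1/2 - θ + (θ²/2)f''(θ)) + (1-4λ)·(4 - 4θ + ((2θ-1)²/2)f''(θ) + ((2θ-1)J'(θ)/J(θ)) = 0 holds. -/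
/-- `2s ≤ log((1+s)/(1-s))` for `0 < s < 1`. -/
lemma stmt5_log_ratio {s : ℝ} (h0 : 0 < s) (h1 : s < 1) :
    2 * s ≤ Real.log ((1 + s) / (1 - s)) := by
  have key : ∀ u ∈ Set.Icc (0 : ℝ) s,
      HasDerivAt (fun v : ℝ => Real.log (1 + v) - Real.log (1 - v) - 2 * v)
        (1 / (1 + u) - -1 / (1 - u) - 2) u := by
    intro u hu
    have h1u : (0:ℝ) < 1 + u := by nlinarith [hu.1]
    have h2u : (0:ℝ) < 1 - u := by nlinarith [hu.2]
    have ha : HasDerivAt (fun v : ℝ => Real.log (1 + v)) (1 / (1 + u)) u := by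
      simpa using ((hasDerivAt_id u).const_add (1:ℝ)).log h1u.ne'
    have hb : HasDerivAt (fun v : ℝ => Real.log (1 - v)) (-1 / (1 - u)) u := by
      simpa using ((hasDerivAt_id u).const_sub (1:ℝ)).log h2u.ne'
    have hc : HasDerivAt (fun v : ℝ => 2 * v) (2:ℝ) u := by
      simpa using (hasDerivAt_id u).const_mul (2:ℝ)
    exact (ha.sub hb).sub hc
  have cont : ContinuousOn (fun v : ℝ => Real.log (1 + v) - Real.log (1 - v) - 2 * v)
      (Set.Icc 0 s) := fun u hu => (key u hu).continuousAt.continuousWithinAt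
  have diffb : DifferentiableOn ℝ (fun v : ℝ => Real.log (1 + v) - Real.log (1 - v) - 2 * v)
      (interior (Set.Icc 0 s)) := fun u hu =>
    ((key u (interior_subset hu)).differentiableAt).differentiableWithinAt
  have nonneg : ∀ u ∈ interior (Set.Icc (0:ℝ) s),
      0 ≤ deriv (fun v : ℝ => Real.log (1 + v) - Real.log (1 - v) - 2 * v) u := by
    intro u hu
    rw [interior_Icc] at hu
    rw [(key u ⟨hu.1.le, hu.2.le⟩).deriv]
    have h1u : (0:ℝ) < 1 + u := by nlinarith [hu.1]
    have h2u : (0:ℝ) < 1 - u := by nlinarith [hu.2]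
    have : 1 / (1 + u) - -1 / (1 - u) - 2 = 2 * u ^ 2 / ((1 + u) * (1 - u)) := by
      field_simp; ring
    rw [this]
    positivity
  have mono := monotoneOn_of_deriv_nonneg (convex_Icc (0:ℝ) s) cont diffb nonneg
  have h0s := mono (Set.left_mem_Icc.2 h0.le) (Set.right_mem_Icc.2 h0.le) h0.le
  simp only [Real.log_one, add_zero, sub_zero, mul_zero] at h0s
  rw [Real.log_div (by positivity) (by linarith : (1:ℝ) - s ≠ 0)]
  norm_num at h0s
  linarith

/-- Derivative of the implicit-defining function. -/
lemma stmt5_keyF {x t : ℝ} (hx0 : 0 < x) (hx4 : x < 1/4)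
    (hL : Real.log ((1 + Real.sqrt (1 - 4 * x)) / (1 - Real.sqrt (1 - 4 * x)))
      = Real.sqrt (1 - 4 * x) * (1/2 - t) / x) :
    HasDerivAt (fun y : ℝ => y / Real.sqrt (1 - 4 * y) *
        Real.log ((1 + Real.sqrt (1 - 4 * y)) / (1 - Real.sqrt (1 - 4 * y))))
      ((1 - 2*t - 4*x + 4*t*x) / (2*x*(1 - 4*x))) x := by
  have h14 : 0 < 1 - 4*x := by linarith
  have hs0 : 0 < Real.sqrt (1 - 4 * x) := Real.sqrt_pos.2 h14
  have hss : Real.sqrt (1 - 4 * x) * Real.sqrt (1 - 4 * x) = 1 - 4 * x :=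
    Real.mul_self_sqrt h14.le
  have hs1 : Real.sqrt (1 - 4 * x) < 1 := by nlinarith
  have h1ms : (0:ℝ) < 1 - Real.sqrt (1 - 4 * x) := by linarith
  have h1ps : (0:ℝ) < 1 + Real.sqrt (1 - 4 * x) := by linarith
  have hsd : HasDerivAt (fun y : ℝ => Real.sqrt (1 - 4 * y))
      (-2 / Real.sqrt (1 - 4 * x)) x := by
    have hi : HasDerivAt (fun y : ℝ => 1 - 4 * y) (-4) x := by
      simpa using ((hasDerivAt_id x).const_mul (4:ℝ)).const_sub 1
    refine ((Real.hasDerivAt_sqrt h14.ne').comp x hi).congr_deriv ?_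
    field_simp
    ring
  have hnum : HasDerivAt (fun y : ℝ => 1 + Real.sqrt (1 - 4 * y))
      (-2 / Real.sqrt (1 - 4 * x)) x := hsd.const_add 1
  have hden : HasDerivAt (fun y : ℝ => 1 - Real.sqrt (1 - 4 * y))
      (-(-2 / Real.sqrt (1 - 4 * x))) x := hsd.const_sub 1
  have hq := hnum.div hden h1ms.ne'
  have hqpos : 0 < (1 + Real.sqrt (1 - 4 * x)) / (1 - Real.sqrt (1 - 4 * x)) :=
    div_pos h1ps h1ms
  have hlogq := hq.log hqpos.ne'
  have hxdivs := (hasDerivAt_id x).div hsd hs0.ne'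
  refine (hxdivs.mul hlogq).congr_deriv ?_
  simp only [Pi.div_apply, id_eq]
  rw [hL]
  have hx' : x = (1 - Real.sqrt (1 - 4 * x) * Real.sqrt (1 - 4 * x)) / 4 := by linarith
  generalize hgen : Real.sqrt (1 - 4 * x) = s at hx' hs0 hs1 h1ms h1ps ⊢
  subst hx'
  have hs0' : s ≠ 0 := ne_of_gt hs0
  have h1ms' : (1:ℝ) - s ≠ 0 := ne_of_gt h1ms
  have h1ps' : (1:ℝ) + s ≠ 0 := ne_of_gt h1ps
  have hxne : 1 - s * s ≠ 0 := by nlinarith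
  field_simp
  ring

/-- With `λ(θ)` implicitly defined, `f` and `J` the explicit functions from the
Harer–Zagier asymptotics, the exact identity
`4λ(θJ'/J + 1/2 - θ + θ²f''/2) + (1-4λ)(4 - 4θ + (2θ-1)²f''/2 + (2θ-1)J'/J) = 0` holds. -/
theorem stmt_5 (lam : ℝ → ℝ)
    (hmem : ∀ t ∈ Set.Ioo (0 : ℝ) (1 / 2), lam t ∈ Set.Ioo (0 : ℝ) (1 / 4))
    (hrel : ∀ t ∈ Set.Ioo (0 : ℝ) (1 / 2),
      t = 1 / 2 - (lam t / Real.sqrt (1 - 4 * lam t)) *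
        Real.log ((1 + Real.sqrt (1 - 4 * lam t)) / (1 - Real.sqrt (1 - 4 * lam t))))
    (hdiff : ∀ t ∈ Set.Ioo (0 : ℝ) (1 / 2),
      DifferentiableAt ℝ lam t ∧ DifferentiableAt ℝ (deriv lam) t)
    (f J : ℝ → ℝ)
    (hf : ∀ t, f t = -t * Real.log (1 - 4 * lam t) - (1 - 2 * t) * Real.log (lam t)
      + 2 * (Real.log 2 - 1) * t)
    (hJ : ∀ t, J t = Real.sqrt (2 / (lam t * (1 - 2 * t - 4 * lam t + 4 * t * lam t))))
    (θ : ℝ) (hθ : θ ∈ Set.Ioo (0 : ℝ) (1 / 2)) :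
    4 * lam θ * (θ * deriv J θ / J θ + 1 / 2 - θ + θ ^ 2 / 2 * deriv (deriv f) θ)
      + (1 - 4 * lam θ) * (4 - 4 * θ + (2 * θ - 1) ^ 2 / 2 * deriv (deriv f) θ
        + (2 * θ - 1) * deriv J θ / J θ) = 0 := by
  -- positivity of g(t) = 1 - 2t - 4λ + 4tλ
  have hgpos : ∀ t ∈ Set.Ioo (0 : ℝ) (1 / 2),
      0 < 1 - 2 * t - 4 * lam t + 4 * t * lam t := by
    intro t ht
    obtain ⟨hx0, hx4⟩ := hmem t ht
    have h14 : 0 < 1 - 4 * lam t := by linarith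
    have hs0 : 0 < Real.sqrt (1 - 4 * lam t) := Real.sqrt_pos.2 h14
    have hss : Real.sqrt (1 - 4 * lam t) * Real.sqrt (1 - 4 * lam t) = 1 - 4 * lam t :=
      Real.mul_self_sqrt h14.le
    have hs1 : Real.sqrt (1 - 4 * lam t) < 1 := by nlinarith
    have hlog := stmt5_log_ratio hs0 hs1
    have h1 := hrel t ht
    have h2 : 2 * lam t ≤ lam t / Real.sqrt (1 - 4 * lam t) *
        Real.log ((1 + Real.sqrt (1 - 4 * lam t)) / (1 - Real.sqrt (1 - 4 * lam t))) := by
      have hpos : 0 < lam t / Real.sqrt (1 - 4 * lam t) := div_pos hx0 hs0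
      calc 2 * lam t = lam t / Real.sqrt (1 - 4 * lam t) *
            (2 * Real.sqrt (1 - 4 * lam t)) := by rw [div_mul_eq_mul_div, eq_div_iff hs0.ne']; ring
        _ ≤ _ := mul_le_mul_of_nonneg_left hlog hpos.le
    nlinarith [mul_pos ht.1 hx0]
  -- derivative of lam
  have hlam' : ∀ t ∈ Set.Ioo (0 : ℝ) (1 / 2),
      HasDerivAt lam
        (-(2 * lam t * (1 - 4 * lam t)) / (1 - 2 * t - 4 * lam t + 4 * t * lam t)) t := by
    intro t ht
    obtain ⟨hx0, hx4⟩ := hmem t ht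
    have h14 : 0 < 1 - 4 * lam t := by linarith
    have hs0 : 0 < Real.sqrt (1 - 4 * lam t) := Real.sqrt_pos.2 h14
    have hG := hgpos t ht
    have hLt : Real.log ((1 + Real.sqrt (1 - 4 * lam t)) / (1 - Real.sqrt (1 - 4 * lam t)))
        = Real.sqrt (1 - 4 * lam t) * (1/2 - t) / lam t := by
      have h1' : lam t / Real.sqrt (1 - 4 * lam t) *
          Real.log ((1 + Real.sqrt (1 - 4 * lam t)) / (1 - Real.sqrt (1 - 4 * lam t)))
          = 1/2 - t := by linarith [hrel t ht]
      rw [div_mul_eq_mul_div, div_eq_iff hs0.ne'] at h1'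
      rw [eq_div_iff hx0.ne']
      linear_combination h1'
    have hD := stmt5_keyF hx0 hx4 hLt
    have hlamt : HasDerivAt lam (deriv lam t) t := (hdiff t ht).1.hasDerivAt
    have hcomp := hD.comp t hlamt
    have hev : ((fun y : ℝ => y / Real.sqrt (1 - 4 * y) *
        Real.log ((1 + Real.sqrt (1 - 4 * y)) / (1 - Real.sqrt (1 - 4 * y)))) ∘ lam)
        =ᶠ[nhds t] (fun u => 1/2 - u) := by
      filter_upwards [Ioo_mem_nhds ht.1 ht.2] with u hu
      have := hrel u hu
      simp only [Function.comp_apply]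
      linarith
    have h3 : HasDerivAt (fun u : ℝ => 1/2 - u) (-1) t := by
      simpa using (hasDerivAt_id t).const_sub (1/2 : ℝ)
    have h4 : (1 - 2*t - 4*lam t + 4*t*lam t) / (2*lam t*(1 - 4*lam t)) * deriv lam t
        = -1 := by
      rw [← hcomp.deriv, hev.deriv_eq]
      exact h3.deriv
    have hd : deriv lam t
        = -(2 * lam t * (1 - 4 * lam t)) / (1 - 2 * t - 4 * lam t + 4 * t * lam t) := by
      rw [div_mul_eq_mul_div, div_eq_iff (mul_pos (mul_pos two_pos hx0) h14).ne'] at h4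
      rw [eq_div_iff hG.ne']
      linear_combination h4
    exact hd ▸ hlamt
  obtain ⟨hθ0, hθh⟩ := hθ
  obtain ⟨hx0, hx4⟩ := hmem θ ⟨hθ0, hθh⟩
  have h14 : 0 < 1 - 4 * lam θ := by linarith
  have hG := hgpos θ ⟨hθ0, hθh⟩
  have hlθ := hlam' θ ⟨hθ0, hθh⟩
  -- second derivative of f
  have hderivf : ∀ t ∈ Set.Ioo (0 : ℝ) (1 / 2),
      deriv f t = -Real.log (1 - 4 * lam t) + 2 * Real.log (lam t) + 2 * Real.log 2 := by
    intro t ht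
    obtain ⟨hx0t, hx4t⟩ := hmem t ht
    have h14t : 0 < 1 - 4 * lam t := by linarith
    have hGt := hgpos t ht
    have hlt := hlam' t ht
    have hft : HasDerivAt f
        (-Real.log (1 - 4 * lam t) + 2 * Real.log (lam t) + 2 * Real.log 2) t := by
      rw [(funext hf : f = fun u => -u * Real.log (1 - 4 * lam u)
        - (1 - 2 * u) * Real.log (lam u) + 2 * (Real.log 2 - 1) * u)]
      refine HasDerivAt.congr_deriv
        ((((hasDerivAt_id t).neg.mul (((hlt.const_mul (4:ℝ)).const_sub 1).log h14t.ne')).sub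
          ((((hasDerivAt_id t).const_mul (2:ℝ)).const_sub 1).mul (hlt.log hx0t.ne'))).add
          ((hasDerivAt_id t).const_mul (2 * (Real.log 2 - 1)))) ?_
      have hGt' := hGt.ne'
      have h14t' := h14t.ne'
      have hx0t' := hx0t.ne'
      have hGt'' : 1 - t * 2 - 4 * lam t + 4 * lam t * t ≠ 0 := by
        rw [show 1 - t * 2 - 4 * lam t + 4 * lam t * t = 1 - 2 * t - 4 * lam t + 4 * t * lam t by ring]
        exact hGt'
      simp only [Pi.neg_apply, id_eq]
      field_simp
      ring
    exact hft.deriv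
  have hfd2 : deriv (deriv f) θ
      = (8 * lam θ - 4) / (1 - 2 * θ - 4 * lam θ + 4 * θ * lam θ) := by
    have hev2 : deriv f =ᶠ[nhds θ]
        (fun u => -Real.log (1 - 4 * lam u) + 2 * Real.log (lam u) + 2 * Real.log 2) := by
      filter_upwards [Ioo_mem_nhds hθ0 hθh] with u hu
      exact hderivf u hu
    rw [hev2.deriv_eq]
    have hclean : HasDerivAt
        (fun u => -Real.log (1 - 4 * lam u) + 2 * Real.log (lam u) + 2 * Real.log 2)
        ((8 * lam θ - 4) / (1 - 2 * θ - 4 * lam θ + 4 * θ * lam θ)) θ := by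
      refine HasDerivAt.congr_deriv
        (((((hlθ.const_mul (4:ℝ)).const_sub 1).log h14.ne').neg.add
          ((hlθ.log hx0.ne').const_mul 2)).add_const (2 * Real.log 2)) ?_
      have hG' := hG.ne'
      have h14' := h14.ne'
      have hx0' := hx0.ne'
      field_simp
      ring
    exact hclean.deriv
  -- derivative of J
  have hvpos : 0 < 2 / (lam θ * (1 - 2 * θ - 4 * lam θ + 4 * θ * lam θ)) :=
    div_pos two_pos (mul_pos hx0 hG)
  have hgfun : HasDerivAt (fun u : ℝ => 1 - 2 * u - 4 * lam u + 4 * u * lam u)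
      (-(2*1) - 4 * (-(2 * lam θ * (1 - 4 * lam θ)) / (1 - 2 * θ - 4 * lam θ + 4 * θ * lam θ))
        + (4*1 * lam θ + 4*θ * (-(2 * lam θ * (1 - 4 * lam θ)) / (1 - 2 * θ - 4 * lam θ + 4 * θ * lam θ)))) θ :=
    ((((hasDerivAt_id θ).const_mul (2:ℝ)).const_sub 1).sub (hlθ.const_mul 4)).add
      (((hasDerivAt_id θ).const_mul (4:ℝ)).mul hlθ)
  have hvfun := (hasDerivAt_const θ (2:ℝ)).div (hlθ.mul hgfun) (mul_pos hx0 hG).ne'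
  have hsqclean : HasDerivAt
      (fun u : ℝ => Real.sqrt (2 / (lam u * (1 - 2 * u - 4 * lam u + 4 * u * lam u))))
      (1 / (2 * Real.sqrt (2 / (lam θ * (1 - 2 * θ - 4 * lam θ + 4 * θ * lam θ)))) *
        (-(2 * ((-(2 * lam θ * (1 - 4 * lam θ)) / (1 - 2 * θ - 4 * lam θ + 4 * θ * lam θ))
            * (1 - 2 * θ - 4 * lam θ + 4 * θ * lam θ)
          + lam θ * (-2 + 4 * lam θ + (-(2 * lam θ * (1 - 4 * lam θ))
              / (1 - 2 * θ - 4 * lam θ + 4 * θ * lam θ)) * (4 * θ - 4))))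
          / (lam θ * (1 - 2 * θ - 4 * lam θ + 4 * θ * lam θ)) ^ 2)) θ := by
    refine ((Real.hasDerivAt_sqrt hvpos.ne').comp θ hvfun).congr_deriv ?_
    simp only [Pi.mul_apply]
    ring
  have hJder : HasDerivAt J
      (1 / (2 * Real.sqrt (2 / (lam θ * (1 - 2 * θ - 4 * lam θ + 4 * θ * lam θ)))) *
        (-(2 * ((-(2 * lam θ * (1 - 4 * lam θ)) / (1 - 2 * θ - 4 * lam θ + 4 * θ * lam θ))
            * (1 - 2 * θ - 4 * lam θ + 4 * θ * lam θ)
          + lam θ * (-2 + 4 * lam θ + (-(2 * lam θ * (1 - 4 * lam θ))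
              / (1 - 2 * θ - 4 * lam θ + 4 * θ * lam θ)) * (4 * θ - 4))))
          / (lam θ * (1 - 2 * θ - 4 * lam θ + 4 * θ * lam θ)) ^ 2)) θ := by
    rw [(funext hJ : J = fun u =>
      Real.sqrt (2 / (lam u * (1 - 2 * u - 4 * lam u + 4 * u * lam u))))]
    exact hsqclean
  have hrr : Real.sqrt (2 / (lam θ * (1 - 2 * θ - 4 * lam θ + 4 * θ * lam θ))) *
      Real.sqrt (2 / (lam θ * (1 - 2 * θ - 4 * lam θ + 4 * θ * lam θ)))
      = 2 / (lam θ * (1 - 2 * θ - 4 * lam θ + 4 * θ * lam θ)) :=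
    Real.mul_self_sqrt hvpos.le
  have hratio : deriv J θ / J θ
      = -(((-(2 * lam θ * (1 - 4 * lam θ)) / (1 - 2 * θ - 4 * lam θ + 4 * θ * lam θ))
            * (1 - 2 * θ - 4 * lam θ + 4 * θ * lam θ)
          + lam θ * (-2 + 4 * lam θ + (-(2 * lam θ * (1 - 4 * lam θ))
              / (1 - 2 * θ - 4 * lam θ + 4 * θ * lam θ)) * (4 * θ - 4))))
        / (2 * (lam θ * (1 - 2 * θ - 4 * lam θ + 4 * θ * lam θ))) := by
    rw [hJder.deriv, hJ θ]
    rw [show (1 / (2 * Real.sqrt (2 / (lam θ * (1 - 2 * θ - 4 * lam θ + 4 * θ * lam θ)))) *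
        (-(2 * ((-(2 * lam θ * (1 - 4 * lam θ)) / (1 - 2 * θ - 4 * lam θ + 4 * θ * lam θ))
            * (1 - 2 * θ - 4 * lam θ + 4 * θ * lam θ)
          + lam θ * (-2 + 4 * lam θ + (-(2 * lam θ * (1 - 4 * lam θ))
              / (1 - 2 * θ - 4 * lam θ + 4 * θ * lam θ)) * (4 * θ - 4))))
          / (lam θ * (1 - 2 * θ - 4 * lam θ + 4 * θ * lam θ)) ^ 2)) /
        Real.sqrt (2 / (lam θ * (1 - 2 * θ - 4 * lam θ + 4 * θ * lam θ)))
        = (-(2 * ((-(2 * lam θ * (1 - 4 * lam θ)) / (1 - 2 * θ - 4 * lam θ + 4 * θ * lam θ))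
            * (1 - 2 * θ - 4 * lam θ + 4 * θ * lam θ)
          + lam θ * (-2 + 4 * lam θ + (-(2 * lam θ * (1 - 4 * lam θ))
              / (1 - 2 * θ - 4 * lam θ + 4 * θ * lam θ)) * (4 * θ - 4))))
          / (lam θ * (1 - 2 * θ - 4 * lam θ + 4 * θ * lam θ)) ^ 2) /
        (2 * (Real.sqrt (2 / (lam θ * (1 - 2 * θ - 4 * lam θ + 4 * θ * lam θ))) *
          Real.sqrt (2 / (lam θ * (1 - 2 * θ - 4 * lam θ + 4 * θ * lam θ))))) from by ring]
    rw [hrr]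
    have hG' := hG.ne'
    have hx0' := hx0.ne'
    field_simp
  simp only [mul_div_assoc]
  rw [hratio, hfd2]
  have hG' := hG.ne'
  have hx0' := hx0.ne'
  have hG'' : 1 - θ * 2 - 4 * lam θ + 4 * lam θ * θ ≠ 0 := by
    rw [show 1 - θ * 2 - 4 * lam θ + 4 * lam θ * θ = 1 - 2 * θ - 4 * lam θ + 4 * θ * lam θ by ring]
    exact hG'
  field_simp
  ring
end

section
/- Let λ : (0,1/2) → ℝ be differentiable with λ(θ) ∈ (0,1/4), and suppose f : (0,1/2) → ℝ is differentiable and satisfies both λ(θ) = exp(-2θ - f(θ) + θ f'(θ)) and 1 = 4λ(θ) + 4λ(θ)² e^{-f'(θ)}. Then the inverse function θ(λ) (where defined and differentiable) satisfies the linear ODE 2θ'(λ) = -1/λ + (4/(1-4λ) + 2/λ)·θ(λ). -/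
/-- If `λ` is differentiable with values in `(0,1/4)`, `f` satisfies
`λ = e^{-2θ - f + θf'}` and `1 = 4λ + 4λ²e^{-f'}`, then the locally defined
differentiable inverse `θ(λ)` satisfies the linear ODE
`2θ'(λ) = -1/λ + (4/(1-4λ) + 2/λ)·θ(λ)`. -/
theorem stmt_6 (lam f θi : ℝ → ℝ) (t : ℝ)
    (ht : t ∈ Set.Ioo (0 : ℝ) (1 / 2))
    (hmem : ∀ s ∈ Set.Ioo (0 : ℝ) (1 / 2), lam s ∈ Set.Ioo (0 : ℝ) (1 / 4))
    (hlam : ∀ s ∈ Set.Ioo (0 : ℝ) (1 / 2), DifferentiableAt ℝ lam s)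
    (hfd : ∀ s ∈ Set.Ioo (0 : ℝ) (1 / 2), DifferentiableAt ℝ f s)
    (hfd2 : ∀ s ∈ Set.Ioo (0 : ℝ) (1 / 2), DifferentiableAt ℝ (deriv f) s)
    (heq1 : ∀ s ∈ Set.Ioo (0 : ℝ) (1 / 2),
      lam s = Real.exp (-2 * s - f s + s * deriv f s))
    (heq2 : ∀ s ∈ Set.Ioo (0 : ℝ) (1 / 2),
      1 = 4 * lam s + 4 * (lam s) ^ 2 * Real.exp (-(deriv f s)))
    (hinv : ∀ᶠ s in nhds t, θi (lam s) = s)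
    (hθid : DifferentiableAt ℝ θi (lam t)) :
    2 * deriv θi (lam t) =
      -(1 / lam t) + (4 / (1 - 4 * lam t) + 2 / lam t) * θi (lam t) := by
  obtain ⟨ht0, ht2⟩ := ht
  have htI : t ∈ Set.Ioo (0:ℝ) (1/2) := ⟨ht0, ht2⟩
  set L := lam t with hLdef
  set F2 := deriv (deriv f) t with hF2def
  set E := Real.exp (-(deriv f t)) with hEdef
  have hLpos : 0 < L := (hmem t htI).1
  have hL4 : L < 1/4 := (hmem t htI).2
  have hLne : L ≠ 0 := ne_of_gt hLpos
  have h4L : (1 : ℝ) - 4 * L ≠ 0 := by nlinarith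
  have hEpos : 0 < E := Real.exp_pos _
  -- derivatives of f
  have hf' : HasDerivAt f (deriv f t) t := (hfd t htI).hasDerivAt
  have hf'' : HasDerivAt (deriv f) F2 t := (hfd2 t htI).hasDerivAt
  -- eventual membership
  have hev : ∀ᶠ s in nhds t, s ∈ Set.Ioo (0:ℝ) (1/2) := isOpen_Ioo.eventually_mem htI
  -- derivative of lam via heq1
  have hg : HasDerivAt (fun s => -2 * s - f s + s * deriv f s)
      (-2 * 1 - deriv f t + (1 * deriv f t + t * F2)) t := by
    exact (((hasDerivAt_id t).const_mul (-2)).sub hf').add ((hasDerivAt_id t).mul hf'')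
  have hgexp : HasDerivAt (fun s => Real.exp (-2 * s - f s + s * deriv f s))
      (Real.exp (-2 * t - f t + t * deriv f t) * (-2 * 1 - deriv f t + (1 * deriv f t + t * F2))) t := hg.exp
  have heqev : lam =ᶠ[nhds t] fun s => Real.exp (-2 * s - f s + s * deriv f s) :=
    hev.mono fun s hs => heq1 s hs
  have hexpL : Real.exp (-2 * t - f t + t * deriv f t) = L := (heq1 t htI).symm
  have hlamHas : HasDerivAt lam (L * (-2 + t * F2)) t := by
    have := hgexp.congr_of_eventuallyEq heqev
    exact this.congr_deriv (by rw [hexpL]; ring)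
  set L' := L * (-2 + t * F2) with hL'def
  -- chain rule: deriv θi (lam t) * L' = 1
  have hcomp : HasDerivAt (fun s => θi (lam s)) (deriv θi (lam t) * L') t :=
    (hθid.hasDerivAt.comp t hlamHas)
  have hid : HasDerivAt (fun s => θi (lam s)) 1 t :=
    (hasDerivAt_id t).congr_of_eventuallyEq hinv
  have hA : deriv θi (lam t) * L' = 1 := hcomp.unique hid
  -- derivative of heq2
  have hexp2 : HasDerivAt (fun s => Real.exp (-(deriv f s))) (E * (-F2)) t := hf''.neg.exp
  have hsq : HasDerivAt (fun s => (lam s) ^ 2) ((2:ℕ) * L ^ 1 * L') t := hlamHas.pow 2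
  have hbig : HasDerivAt (fun s => 4 * lam s + 4 * (lam s) ^ 2 * Real.exp (-(deriv f s)))
      (4 * L' + (4 * ((2:ℕ) * L ^ 1 * L') * E + 4 * L ^ 2 * (E * (-F2)))) t := by
    exact (hlamHas.const_mul 4).add (((hsq.const_mul 4)).mul hexp2)
  have honeev : (fun s => 4 * lam s + 4 * (lam s) ^ 2 * Real.exp (-(deriv f s))) =ᶠ[nhds t]
      (fun _ => (1:ℝ)) := hev.mono fun s hs => (heq2 s hs).symm
  have hone : HasDerivAt (fun s => 4 * lam s + 4 * (lam s) ^ 2 * Real.exp (-(deriv f s))) 0 t :=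
    (hasDerivAt_const t (1:ℝ)).congr_of_eventuallyEq honeev
  have hC : 4 * L' + (4 * ((2:ℕ) * L ^ 1 * L') * E + 4 * L ^ 2 * (E * (-F2))) = 0 :=
    hbig.unique hone
  have hD : 1 = 4 * L + 4 * L ^ 2 * E := heq2 t htI
  have hE' : 4 * L ^ 2 * E = 1 - 4 * L := by linarith
  have hF2eq : L * (1 - 4 * L) * F2 = L' * (2 - 4 * L) := by
    push_cast at hC
    linear_combination (-L) * hC + (2*L' - L*F2) * hE'
  have hkey : L' * (1 - 4 * L) + 2 * L * (1 - 4 * L) = t * L' * (2 - 4 * L) := by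
    have hB : L' = L * (-2 + t * F2) := hL'def
    linear_combination (1 - 4*L) * hB + t * hF2eq
  have hθt : θi (lam t) = t := hinv.self_of_nhds
  rw [hθt]
  have hL'ne : L' ≠ 0 := by
    intro h; rw [h, mul_zero] at hA; exact one_ne_zero hA.symm
  have hDval : deriv θi (lam t) = 1 / L' := by
    field_simp
    linarith [hA]
  have hkr : F2 * (1 - 4*L) + 2*(2 - 4*L) - t*F2*(2-4*L) = 0 := by
    have h0 : L * t * (F2 * (1 - 4*L) + 2*(2 - 4*L) - t*F2*(2-4*L)) = 0 := by
      linear_combination hkey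
    exact (mul_eq_zero.mp h0).resolve_left (mul_ne_zero hLne (ne_of_gt ht0))
  rw [hDval]
  field_simp
  have hI : (1 - L * 4) * (1 - L * 4)⁻¹ = 1 := mul_inv_cancel₀ (by intro h; apply h4L; linarith)
  linear_combination (1 - L * 4)⁻¹ * hkey + (2 * t * L' - L' - 2 * L) * hI
end

section
/- For λ → 0⁺, the implicit relation θ = 1/2 - (λ/√(1-4λ))·log((1+√(1-4λ))/(1-√(1-4λ))) admits the expansion 1/2 - θ = -λ·log λ - 2λ²(1 + log λ) + O(λ³ log λ). -/
/-!
Put `s = √(1 - 4λ)`. Since `1 - s² = 4λ`, `(1 + s) / (1 - s) = ((1 + s) / 2)² / λ`, hence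
`1/2 - θ = (λ / s) (2 log ((1 + s) / 2) - log λ)`. Subtracting `-λ log λ - 2λ²(1 + log λ)` leaves
`(2λ / s) (log ((1 + s) / 2) + λ) - 2λ² (1 / s - 1) - λ log λ (1 / s - 1 - 2λ)`, and the expansions
`1 / s = 1 + 2λ + O(λ²)`, `log ((1 + s) / 2) = -λ + O(λ²)` make this `O(λ³) + O(λ³ log λ)`.
-/

open Filter Asymptotics Topology Real

namespace Asymptotics

variable {α 𝕜 : Type*} [NormedField 𝕜] {l : Filter α} {f g h : α → 𝕜} {c : 𝕜}

theorem IsBigO.mul_tendsto (hfg : f =O[l] g) (hh : Tendsto h l (𝓝 c)) :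
    (fun x => f x * h x) =O[l] g := by
  simpa using hfg.mul (hh.isBigO_one 𝕜)

theorem isBigO_of_eventuallyEq_mul (hfgh : f =ᶠ[l] fun x => g x * h x)
    (hh : Tendsto h l (𝓝 c)) : f =O[l] g :=
  ((isBigO_refl g l).mul_tendsto hh).congr' hfgh.symm EventuallyEq.rfl

end Asymptotics

lemma Real.log_one_add_sub_self_isBigO :
    (fun x : ℝ => log (1 + x) - x) =O[𝓝 0] fun x => x ^ 2 := by
  have h := Complex.isBigO_comp_ofReal_nhds (x := 0) (by simpa using Complex.log_sub_self_isBigO)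
  refine isBigO_norm_norm.mp <| (isBigO_norm_norm.mpr h).congr' ?_ (by simp)
  filter_upwards [Ioi_mem_nhds (by norm_num : (-1 : ℝ) < 0)] with x hx
  rw [← Complex.ofReal_one, ← Complex.ofReal_add, ← Complex.ofReal_log (by linarith [hx.out]),
    ← Complex.ofReal_sub, Complex.norm_real]

lemma Real.isBigO_pow_mul_log_nhdsGT_zero (n : ℕ) :
    (fun x : ℝ => x ^ n) =O[𝓝[>] 0] fun x => x ^ n * log x := by
  have hlog : (fun _ => (1 : ℝ)) =O[𝓝[>] 0] log :=
    ((isLittleO_one_left_iff ℝ).mpr (tendsto_abs_atBot_atTop.comp tendsto_log_nhdsGT_zero)).isBigO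
  simpa using (isBigO_refl (fun x : ℝ => x ^ n) _).mul hlog

lemma eventually_sq_sqrt_one_sub_four_mul :
    ∀ᶠ l in 𝓝 (0 : ℝ), √(1 - 4 * l) ^ 2 = 1 - 4 * l ∧ 0 < √(1 - 4 * l) := by
  filter_upwards [Iio_mem_nhds (by norm_num : (0 : ℝ) < 1 / 4)] with l hl
  have h : 0 < 1 - 4 * l := by linarith [hl.out]
  exact ⟨sq_sqrt h.le, sqrt_pos.mpr h⟩

lemma sqrt_one_sub_four_mul_sub_one_isBigO :
    (fun l : ℝ => √(1 - 4 * l) - 1) =O[𝓝 0] fun l => l := by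
  refine isBigO_of_eventuallyEq_mul (h := fun l => -4 / (1 + √(1 - 4 * l))) ?_
    (ContinuousAt.tendsto (by fun_prop (disch := positivity)))
  filter_upwards [eventually_sq_sqrt_one_sub_four_mul] with l ⟨hsq, hs⟩
  field_simp
  linear_combination hsq

lemma one_div_sqrt_one_sub_four_mul_sub_one_isBigO :
    (fun l : ℝ => 1 / √(1 - 4 * l) - 1) =O[𝓝 0] fun l => l := by
  refine isBigO_of_eventuallyEq_mul (h := fun l => 4 / (√(1 - 4 * l) * (1 + √(1 - 4 * l)))) ?_
    (ContinuousAt.tendsto (by fun_prop (disch := norm_num)))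
  filter_upwards [eventually_sq_sqrt_one_sub_four_mul] with l ⟨hsq, hs⟩
  field_simp
  linear_combination (-1) * hsq

lemma one_div_sqrt_one_sub_four_mul_sub_one_sub_two_mul_isBigO :
    (fun l : ℝ => 1 / √(1 - 4 * l) - 1 - 2 * l) =O[𝓝 0] fun l => l ^ 2 := by
  refine isBigO_of_eventuallyEq_mul
    (h := fun l => (12 + 16 * l) / (√(1 - 4 * l) * (1 + √(1 - 4 * l) * (1 + 2 * l)))) ?_
    (ContinuousAt.tendsto (by fun_prop (disch := norm_num)))
  filter_upwards [eventually_sq_sqrt_one_sub_four_mul,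
    Ioi_mem_nhds (by norm_num : (-1 / 2 : ℝ) < 0)] with l ⟨hsq, hs⟩ hl
  have hD : 1 + √(1 - 4 * l) * (1 + 2 * l) ≠ 0 := by nlinarith [hl.out]
  rw [mul_div_assoc', eq_div_iff (mul_ne_zero hs.ne' hD)]
  field_simp
  linear_combination (-(1 + 2 * l) ^ 2) * hsq

lemma log_one_add_sqrt_one_sub_four_mul_div_two_add_isBigO :
    (fun l : ℝ => log ((1 + √(1 - 4 * l)) / 2) + l) =O[𝓝 0] fun l => l ^ 2 := by
  set u : ℝ → ℝ := fun l => (√(1 - 4 * l) - 1) / 2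
  have hu : u =O[𝓝 0] fun l => l :=
    (sqrt_one_sub_four_mul_sub_one_isBigO.const_mul_left (1 / 2)).congr_left fun l => by ring
  have hu0 : Tendsto u (𝓝 0) (𝓝 0) := hu.trans_tendsto tendsto_id
  have hu2 : (fun l => u l ^ 2) =O[𝓝 0] fun l => l ^ 2 := hu.pow 2
  refine ((log_one_add_sub_self_isBigO.comp_tendsto hu0).trans hu2 |>.sub hu2).congr' ?_
    EventuallyEq.rfl
  -- `l = -u - u ^ 2`
  filter_upwards [eventually_sq_sqrt_one_sub_four_mul] with l ⟨hsq, _⟩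
  simp only [Function.comp_def, u]
  rw [show ∀ x : ℝ, 1 + (x - 1) / 2 = (1 + x) / 2 from fun x => by ring]
  linear_combination (-1 / 4) * hsq

lemma log_one_add_sqrt_div_one_sub_sqrt {l : ℝ} (hl0 : 0 < l) (hl : l ≤ 1 / 4) :
    log ((1 + √(1 - 4 * l)) / (1 - √(1 - 4 * l))) =
      2 * log ((1 + √(1 - 4 * l)) / 2) - log l := by
  have hsq : √(1 - 4 * l) ^ 2 = 1 - 4 * l := sq_sqrt (by linarith)
  have hs0 : 0 ≤ √(1 - 4 * l) := sqrt_nonneg _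
  have hs1 : √(1 - 4 * l) < 1 := by nlinarith
  have hratio : (1 + √(1 - 4 * l)) / (1 - √(1 - 4 * l)) = ((1 + √(1 - 4 * l)) / 2) ^ 2 / l := by
    rw [div_eq_div_iff (by linarith) hl0.ne']
    linear_combination ((1 + √(1 - 4 * l)) / 4) * hsq
  rw [hratio, log_div (by positivity) hl0.ne', log_pow]
  push_cast
  ring

/-- As `λ → 0⁺`, with `θ(λ) = 1/2 - (λ/√(1-4λ))·log((1+√(1-4λ))/(1-√(1-4λ)))`, we have
`1/2 - θ(λ) = -λ log λ - 2λ²(1 + log λ) + O(λ³ log λ)`. -/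
theorem stmt_15 :
    (fun l : ℝ =>
        (1 / 2 - (1 / 2 - (l / Real.sqrt (1 - 4 * l)) *
          Real.log ((1 + Real.sqrt (1 - 4 * l)) / (1 - Real.sqrt (1 - 4 * l))))) -
        (-l * Real.log l - 2 * l ^ 2 * (1 + Real.log l)))
      =O[nhdsWithin 0 (Set.Ioi 0)] fun l : ℝ => l ^ 3 * Real.log l := by
  have hA : (fun l : ℝ => l * ((log ((1 + √(1 - 4 * l)) / 2) + l) * (2 / √(1 - 4 * l))))
      =O[𝓝 0] fun l => l ^ 3 :=
    ((isBigO_refl _ _).mul (log_one_add_sqrt_one_sub_four_mul_div_two_add_isBigO.mul_tendsto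
      (ContinuousAt.tendsto (by fun_prop (disch := norm_num))))).congr_right fun l => by ring
  have hB : (fun l : ℝ => l ^ 2 * (2 * (1 / √(1 - 4 * l) - 1))) =O[𝓝 0] fun l => l ^ 3 :=
    ((isBigO_refl _ _).mul (one_div_sqrt_one_sub_four_mul_sub_one_isBigO.const_mul_left 2))
      |>.congr_right fun l => by ring
  have hC : (fun l : ℝ => log l * (l * (1 / √(1 - 4 * l) - 1 - 2 * l)))
      =O[𝓝 0] fun l => l ^ 3 * log l :=
    ((isBigO_refl _ _).mul
      ((isBigO_refl _ _).mul one_div_sqrt_one_sub_four_mul_sub_one_sub_two_mul_isBigO))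
      |>.congr_right fun l => by ring
  refine ((((hA.sub hB).mono nhdsWithin_le_nhds).trans (isBigO_pow_mul_log_nhdsGT_zero 3)).sub
    (hC.mono nhdsWithin_le_nhds)).congr' ?_ EventuallyEq.rfl
  filter_upwards [Ioo_mem_nhdsGT (by norm_num : (0 : ℝ) < 1 / 4)] with l ⟨hl0, hl⟩
  have hs : 0 < √(1 - 4 * l) := sqrt_pos.mpr (by linarith)
  rw [log_one_add_sqrt_div_one_sub_sqrt hl0 hl.le]
  field_simp
  ring
end
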